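/- Let μ be the coin-tossing measure on the Cantor space 2^ℕ. Suppose A ⊆ 2^ℕ is measurable, nonempty, has empty interior, and A = Φ(A). Then Blur(A) is Σ⁰₃-complete: Blur(A) is a countable union of Gδ sets, and for every subset S of 2^ℕ that is a countable union of Gδ sets there is a continuous function g : 2^ℕ → 2^ℕ with S = g⁻¹(Blur(A)). -/

import Mathlib

/-!
`Blur(A)` is `Σ⁰₃` because it is the union, over rationals `p < q`, of the `Gδ` sets of points
at which the density ratios are infinitely often `< p` and infinitely often `> q`; each ratio
`2^n μ(A ∩ [x↾n])` only depends on `x↾n`.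

For hardness write `S = ⋃ₘ ⋂ₙ V m n` with `V m n` open, and let `g x` be the limit of points of
`A` whose prefixes get fixed stage by stage. Stage `k = ⟨m, _⟩` is triggered if `[x↾k] ⊆ V m c`,
where `c` counts the earlier triggered stages `⟨m, _⟩`, and then makes a dip of depth
`d = 1/(m+1)`: beyond a long prefix of the current point, where the density is almost `1`, we
move to a point where it falls to about `1 - d/2`, and then back to a point of `A` along which it
stays above `1 - d`. Dips exist because `A = Φ(A)` has empty interior, so that every cylinder
contains points of density `< 1/2` (a Lebesgue density argument), and because a cylinder in
which `A` has density `> t` contains a point of `A` along which the density stays `≥ t` (a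
covering argument by disjoint minimal cylinders). If `x ∈ ⋂ₙ V m n`, then infinitely many stages `⟨m, _⟩` are
triggered and the density along `g x` oscillates by `d/4`; otherwise, for each `m`, only finitely
many are, the dips become shallow and the density along `g x` tends to `1`.
-/

open MeasureTheory Set Filter Topology

/-- The basic clopen cylinder of length `n` around `x` in the Cantor space. -/
def cylinder (x : ℕ → Bool) (n : ℕ) : Set (ℕ → Bool) :=
  {y | ∀ i < n, y i = x i}

/-- The "local measure" ratio `2^n · μ(A ∩ [x↾n])`, whose limit (when it exists) is the
density of `A` at `x` in the Cantor space. -/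
noncomputable def densSeq (μ : Measure (ℕ → Bool)) (A : Set (ℕ → Bool))
    (x : ℕ → Bool) (n : ℕ) : ℝ :=
  2 ^ n * (μ (A ∩ cylinder x n)).toReal

/-- `Φ(A)`: the set of points at which `A` has density `1`. -/
def PhiSet (μ : Measure (ℕ → Bool)) (A : Set (ℕ → Bool)) : Set (ℕ → Bool) :=
  {x | Tendsto (densSeq μ A x) atTop (𝓝 1)}

/-- `Blur(A)`: the set of points at which the density of `A` does not exist. -/
def BlurSet (μ : Measure (ℕ → Bool)) (A : Set (ℕ → Bool)) : Set (ℕ → Bool) :=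
  {x | liminf (densSeq μ A x) atTop < limsup (densSeq μ A x) atTop}

/-- A set is `Σ⁰₃` iff it is a countable union of `Gδ` sets. -/
def IsSigma03 {Y : Type*} [TopologicalSpace Y] (S : Set Y) : Prop :=
  ∃ G : ℕ → Set Y, (∀ n, IsGδ (G n)) ∧ S = ⋃ n, G n

open scoped ENNReal

lemma exists_first_le_of_lt {α : Type*} [LinearOrder α] {f : ℕ → α} {t : α} {a b : ℕ}
    (hab : a ≤ b) (ha : t < f a) (hb : f b ≤ t) :
    ∃ c, a < c ∧ f c ≤ t ∧ ∀ j, a ≤ j → j < c → t < f j := by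
  classical
  have hex : ∃ c, a ≤ c ∧ f c ≤ t := ⟨b, hab, hb⟩
  obtain ⟨hac, hc⟩ := Nat.find_spec hex
  refine ⟨Nat.find hex, hac.lt_of_ne ?_, hc, fun j haj hj => ?_⟩
  · intro h
    exact ha.not_ge (h ▸ hc)
  · exact lt_of_not_ge fun hfj => Nat.find_min hex hj ⟨haj, hfj⟩

lemma liminf_lt_limsup_of_frequently_le {ι : Type*} {l : Filter ι} {f : ι → ℝ}
    (h₁ : IsBoundedUnder (· ≤ ·) l f) (h₂ : IsBoundedUnder (· ≥ ·) l f) {s t : ℝ} (hst : s < t)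
    (hs : ∃ᶠ i in l, f i ≤ s) (ht : ∃ᶠ i in l, t ≤ f i) : liminf f l < limsup f l :=
  (liminf_le_of_frequently_le hs h₂).trans_lt (hst.trans_le (le_limsup_of_frequently_le ht h₁))

lemma liminf_lt_limsup_iff_exists_rat {ι : Type*} {l : Filter ι} [l.NeBot] {f : ι → ℝ}
    (h₁ : IsBoundedUnder (· ≤ ·) l f) (h₂ : IsBoundedUnder (· ≥ ·) l f) :
    liminf f l < limsup f l ↔ ∃ pq : ℚ × ℚ, (pq.1 : ℝ) < pq.2 ∧
      (∃ᶠ i in l, f i < pq.1) ∧ ∃ᶠ i in l, (pq.2 : ℝ) < f i := by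
  constructor
  · intro h
    obtain ⟨p, hp, hpq⟩ := exists_rat_btwn h
    obtain ⟨q, hpq', hq⟩ := exists_rat_btwn hpq
    exact ⟨(p, q), hpq', frequently_lt_of_liminf_lt h₁.isCoboundedUnder_ge hp,
      frequently_lt_of_lt_limsup h₂.isCoboundedUnder_le hq⟩
  · rintro ⟨pq, hpq, hp, hq⟩
    exact liminf_lt_limsup_of_frequently_le h₁ h₂ hpq (hp.mono fun _ => le_of_lt)
      (hq.mono fun _ => le_of_lt)

lemma isGδ_setOf_frequently {X : Type*} [TopologicalSpace X] {U : ℕ → Set X}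
    (hU : ∀ n, IsOpen (U n)) : IsGδ {x | ∃ᶠ n in atTop, x ∈ U n} := by
  have : {x | ∃ᶠ n in atTop, x ∈ U n} = ⋂ N, ⋃ n ≥ N, U n := by
    ext x
    simp [frequently_atTop]
  rw [this]
  exact .iInter fun N => (isOpen_biUnion fun n _ => hU n).isGδ

lemma measure_inter_sUnion_le {α : Type*} [MeasurableSpace α] {μ : Measure α}
    {T : Set (Set α)} (hT : T.Countable) (hd : T.Pairwise Disjoint)
    (hm : ∀ C ∈ T, MeasurableSet C) {B : Set α} {c : ℝ≥0∞}
    (hB : ∀ C ∈ T, μ (B ∩ C) ≤ c * μ C) : μ (B ∩ ⋃₀ T) ≤ c * μ (⋃₀ T) :=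
  calc μ (B ∩ ⋃₀ T) = μ (⋃ C ∈ T, B ∩ C) := by rw [sUnion_eq_biUnion, inter_iUnion₂]
    _ ≤ ∑' C : T, μ (B ∩ C) := measure_biUnion_le μ hT _
    _ ≤ ∑' C : T, c * μ C := ENNReal.tsum_le_tsum fun C => hB C C.2
    _ = c * μ (⋃₀ T) := by rw [ENNReal.tsum_mul_left, measure_sUnion hT hd hm]

namespace Cantor

lemma mem_cylinder_self (x : ℕ → Bool) (n : ℕ) : x ∈ cylinder x n :=
  PiNat.self_mem_cylinder x n

lemma cylinder_anti (x : ℕ → Bool) {m n : ℕ} (h : m ≤ n) : cylinder x n ⊆ cylinder x m :=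
  PiNat.cylinder_anti x h

lemma cylinder_eq_of_mem {x y : ℕ → Bool} {n : ℕ} (h : y ∈ cylinder x n) :
    cylinder y n = cylinder x n :=
  PiNat.mem_cylinder_iff_eq.1 h

lemma mem_cylinder_comm {x y : ℕ → Bool} {n : ℕ} : y ∈ cylinder x n ↔ x ∈ cylinder y n :=
  PiNat.mem_cylinder_comm x y n

lemma cylinder_subset_of_mem {x y : ℕ → Bool} {m n : ℕ} (hy : y ∈ cylinder x n) (hnm : n ≤ m) :
    cylinder y m ⊆ cylinder x n :=
  cylinder_eq_of_mem hy ▸ cylinder_anti y hnm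

lemma isOpen_cylinder (x : ℕ → Bool) (n : ℕ) : IsOpen (cylinder x n) :=
  PiNat.isOpen_cylinder _ x n

lemma measurableSet_cylinder (x : ℕ → Bool) (n : ℕ) : MeasurableSet (cylinder x n) :=
  (isOpen_cylinder x n).measurableSet

lemma exists_cylinder_subset {U : Set (ℕ → Bool)} (hU : IsOpen U) {x : ℕ → Bool} (hx : x ∈ U) :
    ∃ n, cylinder x n ⊆ U := by
  obtain ⟨_, ⟨y, n, rfl⟩, hxy, hyU⟩ :=
    (PiNat.isTopologicalBasis_cylinders _).exists_subset_of_mem_open hx hU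
  exact ⟨n, (cylinder_eq_of_mem hxy).trans_subset hyU⟩

lemma finite_range_cylinder (n : ℕ) : (range fun x => cylinder x n).Finite := by
  refine (finite_range fun s : Fin n → Bool =>
    cylinder (fun i => if h : i < n then s ⟨i, h⟩ else false) n).subset ?_
  rintro _ ⟨x, rfl⟩
  exact ⟨fun i => x i, cylinder_eq_of_mem fun i hi => by simp [hi]⟩

lemma cylinder_find_eq_of_mem {P : (ℕ → Bool) → ℕ → Prop} [∀ y, DecidablePred (P y)]
    (hP : ∀ y m z, P y m → z ∈ cylinder y m → P z m) {y z w : ℕ → Bool} (hy : ∃ m, P y m)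
    (hz : ∃ m, P z m) (hwy : w ∈ cylinder y (Nat.find hy)) (hwz : w ∈ cylinder z (Nat.find hz)) :
    cylinder y (Nat.find hy) = cylinder z (Nat.find hz) := by
  have key : ∀ {y z : ℕ → Bool} (hy : ∃ m, P y m) (hz : ∃ m, P z m),
      w ∈ cylinder y (Nat.find hy) → w ∈ cylinder z (Nat.find hz) →
      Nat.find hy ≤ Nat.find hz → Nat.find hz ≤ Nat.find hy := fun hy hz hwy hwz h =>
    Nat.find_min' hz (hP _ _ _ (Nat.find_spec hy)
      (cylinder_subset_of_mem hwy h (mem_cylinder_comm.1 hwz)))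
  have heq : Nat.find hy = Nat.find hz := (le_total _ _).elim
    (fun h => le_antisymm h (key hy hz hwy hwz h)) (fun h => le_antisymm (key hz hy hwz hwy h) h)
  rw [← cylinder_eq_of_mem hwy, ← cylinder_eq_of_mem hwz, heq]

/-- The minimal cylinders `[y↾m]` with `P y m` partition `{y | ∃ m, P y m}`. -/
lemma measureReal_inter_le_of_forall_cylinder {μ : Measure (ℕ → Bool)} [IsFiniteMeasure μ]
    {P : (ℕ → Bool) → ℕ → Prop} (hP : ∀ y m z, P y m → z ∈ cylinder y m → P z m)
    {B : Set (ℕ → Bool)} {c : ℝ} (hc : 0 ≤ c)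
    (hB : ∀ y m, P y m → μ.real (B ∩ cylinder y m) ≤ c * μ.real (cylinder y m)) :
    μ.real (B ∩ {y | ∃ m, P y m}) ≤ c * μ.real {y | ∃ m, P y m} := by
  classical
  let T := range fun y : {y // ∃ m, P y m} => cylinder y (Nat.find y.2)
  have hT : ⋃₀ T = {y | ∃ m, P y m} := by
    ext z
    simp only [T, sUnion_range, mem_iUnion, mem_ofPred_eq]
    exact ⟨fun ⟨y, hz⟩ => ⟨_, hP _ _ z (Nat.find_spec y.2) hz⟩,
      fun hz => ⟨⟨z, hz⟩, mem_cylinder_self z _⟩⟩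
  have hdisj : T.Pairwise Disjoint := by
    rintro _ ⟨y, rfl⟩ _ ⟨z, rfl⟩ hne
    refine not_not.1 fun h => hne ?_
    obtain ⟨w, hwy, hwz⟩ := not_disjoint_iff.1 h
    exact cylinder_find_eq_of_mem hP y.2 z.2 hwy hwz
  have hcount : T.Countable :=
    (countable_iUnion fun n => (finite_range_cylinder n).countable).mono <| by
      rintro _ ⟨y, rfl⟩
      exact mem_iUnion.2 ⟨_, y, rfl⟩
  have hmeas : ∀ C ∈ T, MeasurableSet C := by
    rintro _ ⟨y, rfl⟩
    exact measurableSet_cylinder _ _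
  have hB' : ∀ C ∈ T, μ (B ∩ C) ≤ ENNReal.ofReal c * μ C := by
    rintro _ ⟨y, rfl⟩
    rw [← ofReal_measureReal, ← ofReal_measureReal, ← ENNReal.ofReal_mul hc]
    exact ENNReal.ofReal_le_ofReal (hB y _ (Nat.find_spec y.2))
  rw [← hT, measureReal_def, measureReal_def]
  calc (μ (B ∩ ⋃₀ T)).toReal ≤ (ENNReal.ofReal c * μ (⋃₀ T)).toReal :=
        ENNReal.toReal_mono (by finiteness) (measure_inter_sUnion_le hcount hdisj hmeas hB')
    _ = c * (μ (⋃₀ T)).toReal := by rw [ENNReal.toReal_mul, ENNReal.toReal_ofReal hc]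

/-- By outer regularity, `F` is covered by an open set of almost the same measure, which is a
union of cylinders of length `≥ n` in which `F` has relative measure `≤ c`. -/
lemma measure_eq_zero_of_forall_cylinder_le {μ : Measure (ℕ → Bool)} [IsFiniteMeasure μ]
    {F : Set (ℕ → Bool)} {c : ℝ} (hc0 : 0 ≤ c) (hc1 : c < 1) (n : ℕ)
    (h : ∀ y ∈ F, ∀ m, n ≤ m → μ.real (F ∩ cylinder y m) ≤ c * μ.real (cylinder y m)) :
    μ F = 0 := by
  have hopen : ∀ U, IsOpen U → F ⊆ U → μ.real F ≤ c * μ.real U := by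
    intro U hU hFU
    let P y m := n ≤ m ∧ cylinder y m ⊆ U ∧ (F ∩ cylinder y m).Nonempty
    have hP : ∀ y m z, P y m → z ∈ cylinder y m → P z m := fun y m z hy hz => by
      simpa only [P, cylinder_eq_of_mem hz] using hy
    have hW := measureReal_inter_le_of_forall_cylinder hP hc0 fun z m ⟨hm, _, y, hyF, hyz⟩ => by
      rw [← cylinder_eq_of_mem hyz]
      exact h y hyF m hm
    have hFW : F ⊆ {y | ∃ m, P y m} := fun z hz => by
      obtain ⟨k, hk⟩ := exists_cylinder_subset hU (hFU hz)
      exact ⟨max n k, le_max_left _ _, (cylinder_anti z (le_max_right _ _)).trans hk,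
        z, hz, mem_cylinder_self z _⟩
    have hWU : {y | ∃ m, P y m} ⊆ U := fun z ⟨m, _, hmU, _⟩ => hmU (mem_cylinder_self z m)
    calc μ.real F = μ.real (F ∩ {y | ∃ m, P y m}) := by rw [inter_eq_left.2 hFW]
      _ ≤ c * μ.real {y | ∃ m, P y m} := hW
      _ ≤ c * μ.real U := mul_le_mul_of_nonneg_left (measureReal_mono hWU) hc0
  have hle : μ.real F ≤ c * μ.real F := le_of_forall_pos_le_add fun ε hε => by
    obtain ⟨U, hFU, hU, hUlt⟩ := F.exists_isOpen_lt_of_lt (μ F + ENNReal.ofReal ε)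
      (ENNReal.lt_add_right (measure_ne_top μ F) (ENNReal.ofReal_pos.2 hε).ne')
    have hUε : μ.real U ≤ μ.real F + ε := by
      rw [measureReal_def, measureReal_def, ← ENNReal.toReal_ofReal hε.le,
        ← ENNReal.toReal_add (measure_ne_top μ F) ENNReal.ofReal_ne_top]
      exact ENNReal.toReal_mono (by finiteness) hUlt.le
    nlinarith [hopen U hU hFU, measureReal_nonneg (μ := μ) (s := F)]
  rw [← ofReal_measureReal, ENNReal.ofReal_eq_zero]
  nlinarith [measureReal_nonneg (μ := μ) (s := F)]

section CoinTossing

variable {μ : Measure (ℕ → Bool)} {A : Set (ℕ → Bool)}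

lemma densSeq_eq_of_mem {x y : ℕ → Bool} {n : ℕ} (h : y ∈ cylinder x n) :
    densSeq μ A y n = densSeq μ A x n := by
  rw [densSeq, cylinder_eq_of_mem h, densSeq]

lemma densSeq_nonneg (x : ℕ → Bool) (n : ℕ) : 0 ≤ densSeq μ A x n := by
  unfold densSeq; positivity

variable (hμ : ∀ (x : ℕ → Bool) (n : ℕ), μ (cylinder x n) = 1 / 2 ^ n)
include hμ

lemma isProbabilityMeasure_of_cylinder : IsProbabilityMeasure μ := by
  have h0 : cylinder (fun _ => false) 0 = univ := PiNat.cylinder_zero _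
  exact ⟨by rw [← h0, hμ]; simp⟩

lemma measureReal_cylinder (x : ℕ → Bool) (n : ℕ) : μ.real (cylinder x n) = (2 ^ n)⁻¹ := by
  simp [measureReal_def, hμ]

lemma measureReal_inter_cylinder (x : ℕ → Bool) (n : ℕ) :
    μ.real (A ∩ cylinder x n) = densSeq μ A x n * μ.real (cylinder x n) := by
  rw [densSeq, measureReal_cylinder hμ, ← measureReal_def]
  field_simp

lemma densSeq_le_one (x : ℕ → Bool) (n : ℕ) : densSeq μ A x n ≤ 1 := by
  have := isProbabilityMeasure_of_cylinder hμ
  have hpos : 0 < μ.real (cylinder x n) := by rw [measureReal_cylinder hμ]; positivity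
  refine le_of_mul_le_mul_right ?_ hpos
  rw [← measureReal_inter_cylinder hμ, one_mul]
  exact measureReal_mono inter_subset_right

lemma two_mul_densSeq_sub_one_le (x : ℕ → Bool) (n : ℕ) :
    2 * densSeq μ A x n - 1 ≤ densSeq μ A x (n + 1) := by
  have := isProbabilityMeasure_of_cylinder hμ
  have hsub : A ∩ cylinder x n ⊆ (A ∩ cylinder x (n + 1)) ∪ (cylinder x n \ cylinder x (n + 1)) :=
    fun z ⟨hzA, hz⟩ => by
      by_cases hz' : z ∈ cylinder x (n + 1)
      · exact Or.inl ⟨hzA, hz'⟩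
      · exact Or.inr ⟨hz, hz'⟩
  have hle := (measureReal_mono (μ := μ) hsub).trans (measureReal_union_le _ _)
  rw [measureReal_sdiff (cylinder_anti x n.le_succ) (measurableSet_cylinder x _),
    measureReal_inter_cylinder hμ, measureReal_inter_cylinder hμ, measureReal_cylinder hμ,
    measureReal_cylinder hμ, pow_succ] at hle
  have h2 : (0 : ℝ) < (2 ^ n)⁻¹ := by positivity
  rw [mul_inv] at hle
  nlinarith

lemma cylinder_subset_phiSet {x : ℕ → Bool} {n : ℕ} (h : μ (cylinder x n \ A) = 0) :
    cylinder x n ⊆ PhiSet μ A := by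
  intro y hy
  refine tendsto_atTop_of_eventually_const (i₀ := n) fun m hm => ?_
  have hdiff : μ (cylinder y m \ A) = 0 :=
    measure_mono_null (sdiff_subset_sdiff_left (cylinder_subset_of_mem hy hm)) h
  have hAy : μ (A ∩ cylinder y m) = μ (cylinder y m) := le_antisymm
    (measure_mono inter_subset_right)
    (by simpa [hdiff, inter_comm] using measure_le_inter_add_sdiff μ (cylinder y m) A)
  rw [densSeq, hAy, ← measureReal_def, measureReal_cylinder hμ]
  exact mul_inv_cancel₀ (by positivity)

/-- Otherwise `[x↾n] \ A` would be null, so `[x↾n] ⊆ Φ(A) = A` would lie in the interior of `A`. -/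
lemma exists_densSeq_lt_half (hAmeas : MeasurableSet A) (hAint : interior A = ∅)
    (hAPhi : A = PhiSet μ A) (x : ℕ → Bool) (n : ℕ) :
    ∃ y ∈ cylinder x n, ∃ m, n ≤ m ∧ densSeq μ A y m < 1 / 2 := by
  have := isProbabilityMeasure_of_cylinder hμ
  by_contra! h
  have hnull : μ (cylinder x n \ A) = 0 := by
    refine measure_eq_zero_of_forall_cylinder_le (c := 1 / 2) (by norm_num) (by norm_num) n ?_
    intro y ⟨hy, _⟩ m hm
    rw [← inter_sdiff_right_comm, inter_eq_right.2 (cylinder_subset_of_mem hy hm)]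
    have hsplit := measureReal_sdiff_add_inter (μ := μ) (s := cylinder y m) hAmeas
    have hhalf := mul_le_mul_of_nonneg_right (h y hy m hm)
      (measureReal_nonneg (μ := μ) (s := cylinder y m))
    rw [← measureReal_inter_cylinder hμ, inter_comm] at hhalf
    linarith
  have hsubA : cylinder x n ⊆ A := hAPhi ▸ cylinder_subset_phiSet hμ hnull
  have hx := interior_maximal hsubA (isOpen_cylinder x n) (mem_cylinder_self x n)
  simp [hAint] at hx

lemma exists_mem_forall_le_densSeq {y : ℕ → Bool} {k : ℕ} {c : ℝ} (hc0 : 0 ≤ c)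
    (hc : c < densSeq μ A y k) :
    ∃ p ∈ A, p ∈ cylinder y k ∧ ∀ m, k ≤ m → c ≤ densSeq μ A p m := by
  have := isProbabilityMeasure_of_cylinder hμ
  by_contra! h
  let P z m := k ≤ m ∧ cylinder z m ⊆ cylinder y k ∧ densSeq μ A z m < c
  have hP : ∀ z m w, P z m → w ∈ cylinder z m → P w m := fun z m w hz hw => by
    simpa only [P, cylinder_eq_of_mem hw, densSeq_eq_of_mem hw] using hz
  have hW := measureReal_inter_le_of_forall_cylinder hP hc0 fun z m hz => by
    rw [measureReal_inter_cylinder hμ]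
    exact mul_le_mul_of_nonneg_right hz.2.2.le measureReal_nonneg
  have hAW : A ∩ cylinder y k ⊆ A ∩ {z | ∃ m, P z m} := fun p ⟨hpA, hp⟩ => by
    obtain ⟨m, hm, hlt⟩ := h p hpA hp
    exact ⟨hpA, m, hm, cylinder_subset_of_mem hp hm, hlt⟩
  have hWy : {z | ∃ m, P z m} ⊆ cylinder y k := fun z ⟨m, _, hzy, _⟩ =>
    hzy (mem_cylinder_self z m)
  have hpos : 0 < μ.real (cylinder y k) := by rw [measureReal_cylinder hμ]; positivity
  have hle : μ.real (A ∩ cylinder y k) ≤ c * μ.real (cylinder y k) :=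
    calc μ.real (A ∩ cylinder y k) ≤ μ.real (A ∩ {z | ∃ m, P z m}) := measureReal_mono hAW
      _ ≤ c * μ.real {z | ∃ m, P z m} := hW
      _ ≤ c * μ.real (cylinder y k) := mul_le_mul_of_nonneg_left (measureReal_mono hWy) hc0
  rw [measureReal_inter_cylinder hμ] at hle
  exact (mul_lt_mul_of_pos_right hc hpos).not_ge hle

lemma isBoundedUnder_le_densSeq (x : ℕ → Bool) :
    IsBoundedUnder (· ≤ ·) atTop (densSeq μ A x) :=
  isBoundedUnder_of ⟨1, densSeq_le_one hμ x⟩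

omit hμ in
lemma isBoundedUnder_ge_densSeq (x : ℕ → Bool) :
    IsBoundedUnder (· ≥ ·) atTop (densSeq μ A x) :=
  isBoundedUnder_of ⟨0, densSeq_nonneg x⟩

end CoinTossing

structure IsDip (μ : Measure (ℕ → Bool)) (A : Set (ℕ → Bool)) (a : ℝ) (p : ℕ → Bool) (l : ℕ)
    (q : ℕ → Bool) (l₁ l₂ : ℕ) : Prop where
  mem : q ∈ A
  le_start : l ≤ l₁
  start_lt : l₁ < l₂
  mem_cylinder : q ∈ cylinder p l₁
  high : 1 - a / 4 < densSeq μ A q l₁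
  low : densSeq μ A q l₂ ≤ 1 - a / 2
  floor : ∀ j, l₁ ≤ j → 1 - a ≤ densSeq μ A q j

def HasDips (μ : Measure (ℕ → Bool)) (A : Set (ℕ → Bool)) : Prop :=
  ∀ p ∈ A, ∀ a : ℝ, 0 < a → a ≤ 1 → ∀ l, ∃ q l₁ l₂, IsDip μ A a p l q l₁ l₂

/-- Go far along `p` to a high density, leave `[p↾l₁]` towards a point where the density
drops below `1/2`, stop at the first length `l₂` where it is `≤ 1 - a/2` (halving keeps it
above `1 - a` there), and rise back into `A` keeping the density at least `1 - a`. -/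
lemma hasDips {μ : Measure (ℕ → Bool)} {A : Set (ℕ → Bool)}
    (hμ : ∀ (x : ℕ → Bool) (n : ℕ), μ (cylinder x n) = 1 / 2 ^ n)
    (hAmeas : MeasurableSet A) (hAint : interior A = ∅) (hAPhi : A = PhiSet μ A) :
    HasDips μ A := by
  intro p hp a ha0 ha1 l
  have hpΦ : Tendsto (densSeq μ A p) atTop (𝓝 1) := by rw [hAPhi] at hp; exact hp
  obtain ⟨l₁, hl₁, hhigh⟩ := ((eventually_ge_atTop l).and
    (hpΦ.eventually (lt_mem_nhds (a := 1 - a / 4) (by linarith)))).exists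
  obtain ⟨y, hy, m, hm, hym⟩ := exists_densSeq_lt_half hμ hAmeas hAint hAPhi p l₁
  have hyl₁ : densSeq μ A y l₁ = densSeq μ A p l₁ := densSeq_eq_of_mem hy
  obtain ⟨l₂, hl₁₂, hlow, hbefore⟩ := exists_first_le_of_lt (f := densSeq μ A y)
    (t := 1 - a / 2) hm (by linarith) (by linarith)
  have hl₂ : 1 - a < densSeq μ A y l₂ := by
    have hdouble := two_mul_densSeq_sub_one_le hμ (A := A) y (l₂ - 1)
    have hprev := hbefore (l₂ - 1) (by omega) (by omega)
    rw [Nat.sub_add_cancel (by omega)] at hdouble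
    linarith
  obtain ⟨q, hqA, hq, hrise⟩ := exists_mem_forall_le_densSeq hμ (by linarith) hl₂
  have hqy : ∀ j ≤ l₂, densSeq μ A q j = densSeq μ A y j := fun j hj =>
    densSeq_eq_of_mem (cylinder_anti y hj hq)
  refine ⟨q, l₁, l₂, hqA, hl₁, hl₁₂, cylinder_subset_of_mem hy le_rfl
    (cylinder_anti y hl₁₂.le hq), ?_, ?_, fun j hj => ?_⟩
  · rw [hqy l₁ hl₁₂.le, hyl₁]
    exact hhigh
  · rw [hqy l₂ le_rfl]
    exact hlow
  · rcases lt_or_ge j l₂ with h | h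
    · rw [hqy j h.le]
      linarith [hbefore j hj h]
    · exact hrise j h

section Reduction

variable {μ : Measure (ℕ → Bool)} {A : Set (ℕ → Bool)}

/-- The fallback `(p, l + 1)` never occurs for `p ∈ A` (see `hasDips`); it makes the lengths
increase unconditionally. -/
noncomputable def dip (μ : Measure (ℕ → Bool)) (A : Set (ℕ → Bool)) (a : ℝ) (p : ℕ → Bool)
    (l : ℕ) : (ℕ → Bool) × ℕ :=
  open Classical in
  if h : ∃ q l₁ l₂, IsDip μ A a p l q l₁ l₂ then (h.choose, h.choose_spec.choose_spec.choose)
  else (p, l + 1)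

lemma dip_isDip {a : ℝ} {p : ℕ → Bool} {l : ℕ} (h : ∃ q l₁ l₂, IsDip μ A a p l q l₁ l₂) :
    ∃ l₁, IsDip μ A a p l (dip μ A a p l).1 l₁ (dip μ A a p l).2 := by
  rw [dip, dif_pos h]
  exact ⟨_, h.choose_spec.choose_spec.choose_spec⟩

lemma lt_dip_snd (a : ℝ) (p : ℕ → Bool) (l : ℕ) : l < (dip μ A a p l).2 := by
  by_cases h : ∃ q l₁ l₂, IsDip μ A a p l q l₁ l₂
  · obtain ⟨l₁, hd⟩ := dip_isDip h
    exact hd.le_start.trans_lt hd.start_lt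
  · simp [dip, h]

lemma dip_fst_mem_cylinder (a : ℝ) (p : ℕ → Bool) (l : ℕ) :
    (dip μ A a p l).1 ∈ cylinder p l := by
  by_cases h : ∃ q l₁ l₂, IsDip μ A a p l q l₁ l₂
  · obtain ⟨l₁, hd⟩ := dip_isDip h
    exact cylinder_anti p hd.le_start hd.mem_cylinder
  · simpa [dip, h] using mem_cylinder_self p l

noncomputable def dipDepth (m : ℕ) : ℝ := 1 / (m + 1)

lemma dipDepth_pos (m : ℕ) : 0 < dipDepth m := by
  unfold dipDepth; positivity

lemma dipDepth_le_one (m : ℕ) : dipDepth m ≤ 1 := by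
  unfold dipDepth; bound

/-- A point of `A`, the length of its prefix that is fixed for good, and for each `m` the
number of triggered stages `⟨m, _⟩` so far. -/
structure Stage where
  pt : ℕ → Bool
  len : ℕ
  count : ℕ → ℕ

namespace Stage

def Triggered (V : ℕ → ℕ → Set (ℕ → Bool)) (x : ℕ → Bool) (k : ℕ) (s : Stage) : Prop :=
  cylinder x k ⊆ V k.unpair.1 (s.count k.unpair.1)

open Classical in
noncomputable def next (μ : Measure (ℕ → Bool)) (A : Set (ℕ → Bool))
    (V : ℕ → ℕ → Set (ℕ → Bool)) (x : ℕ → Bool) (k : ℕ) (s : Stage) : Stage :=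
  if s.Triggered V x k then
    ⟨(dip μ A (dipDepth k.unpair.1) s.pt s.len).1, (dip μ A (dipDepth k.unpair.1) s.pt s.len).2,
      Function.update s.count k.unpair.1 (s.count k.unpair.1 + 1)⟩
  else ⟨s.pt, s.len + 1, s.count⟩

variable {V : ℕ → ℕ → Set (ℕ → Bool)} {x : ℕ → Bool} {k : ℕ} (s : Stage)

lemma len_lt_next_len : s.len < (s.next μ A V x k).len := by
  unfold next
  split_ifs
  · exact lt_dip_snd _ _ _
  · exact s.len.lt_succ_self

lemma next_pt_mem_cylinder : (s.next μ A V x k).pt ∈ cylinder s.pt s.len := by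
  unfold next
  split_ifs
  · exact dip_fst_mem_cylinder _ _ _
  · exact mem_cylinder_self _ _

open Classical in
lemma next_count (m : ℕ) : (s.next μ A V x k).count m =
    if s.Triggered V x k ∧ k.unpair.1 = m then s.count m + 1 else s.count m := by
  unfold next
  by_cases h : s.Triggered V x k
  · by_cases hm : k.unpair.1 = m
    · subst hm; simp [h]
    · simp [h, hm, Function.update_of_ne (Ne.symm hm)]
  · simp [h]

open Classical in
lemma next_congr {y : ℕ → Bool} (h : cylinder x k = cylinder y k) :
    s.next μ A V x k = s.next μ A V y k := by
  unfold next
  exact if_congr (by rw [Triggered, Triggered, h]) rfl rfl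

lemma next_pt_mem (hdips : HasDips μ A) (hs : s.pt ∈ A) : (s.next μ A V x k).pt ∈ A := by
  unfold next
  split_ifs
  · obtain ⟨l₁, hd⟩ := dip_isDip (hdips s.pt hs _ (dipDepth_pos _) (dipDepth_le_one _) s.len)
    exact hd.mem
  · exact hs

lemma isDip_next (hdips : HasDips μ A) (hs : s.pt ∈ A) (h : s.Triggered V x k) :
    ∃ l₁, IsDip μ A (dipDepth k.unpair.1) s.pt s.len (s.next μ A V x k).pt l₁
      (s.next μ A V x k).len := by
  simp only [next, if_pos h]
  exact dip_isDip (hdips s.pt hs _ (dipDepth_pos _) (dipDepth_le_one _) s.len)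

end Stage

noncomputable def stage (μ : Measure (ℕ → Bool)) (A : Set (ℕ → Bool))
    (V : ℕ → ℕ → Set (ℕ → Bool)) (p₀ x : ℕ → Bool) : ℕ → Stage
  | 0 => ⟨p₀, 0, fun _ => 0⟩
  | k + 1 => (stage μ A V p₀ x k).next μ A V x k

/-- Coordinate `i` no longer changes after stage `i + 1`, whose length exceeds `i`. -/
noncomputable def reduction (μ : Measure (ℕ → Bool)) (A : Set (ℕ → Bool))
    (V : ℕ → ℕ → Set (ℕ → Bool)) (p₀ x : ℕ → Bool) : ℕ → Bool :=
  fun i => (stage μ A V p₀ x (i + 1)).pt i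

variable {V : ℕ → ℕ → Set (ℕ → Bool)} {p₀ x : ℕ → Bool}

lemma stage_succ (k : ℕ) :
    stage μ A V p₀ x (k + 1) = (stage μ A V p₀ x k).next μ A V x k := rfl

lemma stage_len_strictMono : StrictMono fun k => (stage μ A V p₀ x k).len :=
  strictMono_nat_of_lt_succ fun _ => Stage.len_lt_next_len _

lemma le_stage_len (k : ℕ) : k ≤ (stage μ A V p₀ x k).len :=
  stage_len_strictMono.le_apply

lemma stage_pt_mem_cylinder {j k : ℕ} (hjk : j ≤ k) :
    (stage μ A V p₀ x k).pt ∈ cylinder (stage μ A V p₀ x j).pt (stage μ A V p₀ x j).len := by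
  induction k, hjk using Nat.le_induction with
  | base => exact mem_cylinder_self _ _
  | succ _ hjk ih =>
    exact cylinder_subset_of_mem ih (stage_len_strictMono.monotone hjk)
      (Stage.next_pt_mem_cylinder _)

lemma reduction_mem_cylinder (k : ℕ) :
    reduction μ A V p₀ x ∈ cylinder (stage μ A V p₀ x k).pt (stage μ A V p₀ x k).len := by
  intro i hi
  rcases le_total (i + 1) k with h | h
  · exact (stage_pt_mem_cylinder h i (le_stage_len (i + 1))).symm
  · exact stage_pt_mem_cylinder h i hi

lemma densSeq_reduction {j k : ℕ} (h : j ≤ (stage μ A V p₀ x k).len) :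
    densSeq μ A (reduction μ A V p₀ x) j = densSeq μ A (stage μ A V p₀ x k).pt j :=
  densSeq_eq_of_mem (cylinder_anti _ h (reduction_mem_cylinder k))

lemma stage_congr {y : ℕ → Bool} {k : ℕ} (h : y ∈ cylinder x k) {j : ℕ} (hj : j ≤ k) :
    stage μ A V p₀ y j = stage μ A V p₀ x j := by
  induction j with
  | zero => rfl
  | succ j ih =>
    rw [stage_succ, stage_succ, ih (by omega)]
    exact Stage.next_congr _ (cylinder_eq_of_mem (cylinder_anti x (by omega) h))

lemma continuous_reduction : Continuous (reduction μ A V p₀) := by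
  refine continuous_pi fun i => IsLocallyConstant.continuous ?_
  refine (IsLocallyConstant.iff_exists_open _).2 fun x => ⟨cylinder x (i + 1),
    isOpen_cylinder x _, mem_cylinder_self x _, fun y hy => ?_⟩
  simp only [reduction, stage_congr hy le_rfl]

lemma stage_count_mono (m : ℕ) : Monotone fun k => (stage μ A V p₀ x k).count m := by
  refine monotone_nat_of_le_succ fun k => ?_
  simp only [stage_succ, Stage.next_count]
  split_ifs <;> omega

lemma stage_pt_mem (hdips : HasDips μ A) (hp₀ : p₀ ∈ A) (k : ℕ) : (stage μ A V p₀ x k).pt ∈ A := by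
  induction k with
  | zero => exact hp₀
  | succ k ih => exact Stage.next_pt_mem _ hdips ih

/-- If the count of `m` got stuck at `n`, the open set `V m n ∋ x` would contain `[x↾k]` for
some later stage `k = ⟨m, _⟩`, which would then be triggered. -/
lemma frequently_triggered (hV : ∀ m n, IsOpen (V m n)) {m : ℕ} (hx : ∀ n, x ∈ V m n) :
    ∃ᶠ k in atTop, (stage μ A V p₀ x k).Triggered V x k ∧ k.unpair.1 = m := by
  refine frequently_atTop.2 fun K => ?_
  by_contra! hcon
  have hconst : ∀ k, K ≤ k → (stage μ A V p₀ x k).count m = (stage μ A V p₀ x K).count m := by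
    intro k hk
    induction k, hk using Nat.le_induction with
    | base => rfl
    | succ k hk ih =>
      rw [stage_succ, Stage.next_count, if_neg fun h => hcon k hk h.1 h.2, ih]
  obtain ⟨w, hw⟩ := exists_cylinder_subset (hV m _) (hx ((stage μ A V p₀ x K).count m))
  have hk := Nat.right_le_pair m (max w K)
  refine hcon _ (le_of_max_le_right hk) ?_ (by simp)
  rw [Stage.Triggered, Nat.unpair_pair, hconst _ (le_of_max_le_right hk)]
  exact (cylinder_anti x (le_of_max_le_left hk)).trans hw

lemma reduction_mem_blurSet (hμ : ∀ (x : ℕ → Bool) (n : ℕ), μ (cylinder x n) = 1 / 2 ^ n)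
    (hdips : HasDips μ A) (hp₀ : p₀ ∈ A) (hV : ∀ m n, IsOpen (V m n)) {m : ℕ}
    (hx : ∀ n, x ∈ V m n) : reduction μ A V p₀ x ∈ BlurSet μ A := by
  have hdip : ∀ K, ∃ k ≥ K, ∃ l₁, IsDip μ A (dipDepth m) (stage μ A V p₀ x k).pt
      (stage μ A V p₀ x k).len (stage μ A V p₀ x (k + 1)).pt l₁
      (stage μ A V p₀ x (k + 1)).len := fun K => by
    obtain ⟨k, hk, htk, hkm⟩ := frequently_atTop.1 (frequently_triggered hV hx) K
    obtain ⟨l₁, hd⟩ := Stage.isDip_next _ hdips (stage_pt_mem hdips hp₀ k) htk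
    rw [hkm] at hd
    exact ⟨k, hk, l₁, hd⟩
  refine liminf_lt_limsup_of_frequently_le (isBoundedUnder_le_densSeq hμ _)
    (isBoundedUnder_ge_densSeq _) (s := 1 - dipDepth m / 2) (t := 1 - dipDepth m / 4)
    (by linarith [dipDepth_pos m]) (frequently_atTop.2 fun K => ?_)
    (frequently_atTop.2 fun K => ?_)
  · obtain ⟨k, hk, l₁, hd⟩ := hdip K
    refine ⟨(stage μ A V p₀ x (k + 1)).len, hk.trans (k.le_succ.trans (le_stage_len _)), ?_⟩
    rw [densSeq_reduction le_rfl]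
    exact hd.low
  · obtain ⟨k, hk, l₁, hd⟩ := hdip K
    refine ⟨l₁, hk.trans ((le_stage_len k).trans hd.le_start), ?_⟩
    rw [densSeq_reduction hd.start_lt.le]
    exact hd.high.le

lemma stage_count_le {m n : ℕ} (hx : x ∉ V m n) (k : ℕ) : (stage μ A V p₀ x k).count m ≤ n := by
  induction k with
  | zero => exact n.zero_le
  | succ k ih =>
    rw [stage_succ, Stage.next_count]
    split_ifs with h
    · refine Nat.succ_le_of_lt (lt_of_le_of_ne ih fun heq => hx ?_)
      have := h.1 (mem_cylinder_self x k)
      rwa [h.2, heq] at this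
    · exact ih

lemma eventually_not_triggered {m n : ℕ} (hx : x ∉ V m n) :
    ∀ᶠ k in atTop, ¬((stage μ A V p₀ x k).Triggered V x k ∧ k.unpair.1 = m) := by
  by_contra h
  rw [not_eventually] at h
  simp only [not_not] at h
  have hgrow : ∀ N, ∃ k, N ≤ (stage μ A V p₀ x k).count m := by
    intro N
    induction N with
    | zero => exact ⟨0, le_rfl⟩
    | succ N ih =>
      obtain ⟨k, hk⟩ := ih
      obtain ⟨k', hk', htrig⟩ := frequently_atTop.1 h k
      refine ⟨k' + 1, ?_⟩
      rw [stage_succ, Stage.next_count, if_pos htrig]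
      have := stage_count_mono (μ := μ) (A := A) (V := V) (p₀ := p₀) (x := x) m hk'
      simp only at this
      omega
  obtain ⟨k, hk⟩ := hgrow (n + 1)
  have := stage_count_le (μ := μ) (A := A) (p₀ := p₀) hx k
  omega

lemma Stage.lt_densSeq_next (hdips : HasDips μ A) {k : ℕ} (s : Stage) (hs : s.pt ∈ A) {b : ℝ}
    {N : ℕ} (hb : s.Triggered V x k → b < 1 - dipDepth k.unpair.1)
    (h : ∀ j ≥ N, b < densSeq μ A s.pt j) :
    ∀ j ≥ N, b < densSeq μ A (s.next μ A V x k).pt j := by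
  intro j hj
  by_cases ht : s.Triggered V x k
  · obtain ⟨l₁, hd⟩ := s.isDip_next hdips hs ht
    rcases le_or_gt j l₁ with hjl | hjl
    · rw [densSeq_eq_of_mem (cylinder_anti _ hjl hd.mem_cylinder)]
      exact h j hj
    · exact (hb ht).trans_le (hd.floor j hjl.le)
  · simp only [next, if_neg ht]
    exact h j hj

/-- Only finitely many dips of depth `≥ 1/(M+1)` are made, and later shallow dips keep the
density above the level that the current point of `A` has reached. -/
lemma tendsto_densSeq_reduction (hμ : ∀ (x : ℕ → Bool) (n : ℕ), μ (cylinder x n) = 1 / 2 ^ n)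
    (hdips : HasDips μ A) (hAPhi : A ⊆ PhiSet μ A) (hp₀ : p₀ ∈ A) (hx : ∀ m, ∃ n, x ∉ V m n) :
    Tendsto (densSeq μ A (reduction μ A V p₀ x)) atTop (𝓝 1) := by
  refine tendsto_order.2 ⟨fun b hb => ?_,
    fun b hb => Eventually.of_forall fun j => (densSeq_le_one hμ _ j).trans_lt hb⟩
  choose n hn using hx
  obtain ⟨M, hM⟩ := exists_nat_one_div_lt (sub_pos.2 hb)
  obtain ⟨K, hK⟩ := ((eventually_all_finite (finite_Iic M)).2 fun m _ =>
    eventually_not_triggered (μ := μ) (A := A) (p₀ := p₀) (hn m)).exists_forall_of_atTop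
  have hpK : Tendsto (densSeq μ A (stage μ A V p₀ x K).pt) atTop (𝓝 1) :=
    hAPhi (stage_pt_mem hdips hp₀ K)
  obtain ⟨N, hN⟩ := eventually_atTop.1 (hpK.eventually (lt_mem_nhds hb))
  have hfloor : ∀ k, K ≤ k → ∀ j ≥ N, b < densSeq μ A (stage μ A V p₀ x k).pt j := by
    intro k hk
    induction k, hk using Nat.le_induction with
    | base => exact hN
    | succ k hk ih =>
      refine Stage.lt_densSeq_next hdips _ (stage_pt_mem hdips hp₀ k) (fun ht => ?_) ih
      have hm : M < k.unpair.1 := lt_of_not_ge fun hm => hK k hk _ hm ⟨ht, rfl⟩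
      have : dipDepth k.unpair.1 ≤ 1 / (M + 1) := by
        unfold dipDepth
        gcongr
      linarith
  refine eventually_atTop.2 ⟨N, fun j hj => ?_⟩
  rw [densSeq_reduction ((le_max_right K j).trans (le_stage_len _))]
  exact hfloor _ (le_max_left K j) j hj

end Reduction

section Sigma03

variable {μ : Measure (ℕ → Bool)} {A : Set (ℕ → Bool)}

lemma isOpen_setOf_densSeq (n : ℕ) (P : ℝ → Prop) : IsOpen {x | P (densSeq μ A x n)} :=
  isOpen_iff_forall_mem_open.2 fun x hx => ⟨cylinder x n, fun y hy => by
    simpa only [mem_ofPred_eq, densSeq_eq_of_mem hy] using hx,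
    isOpen_cylinder x n, mem_cylinder_self x n⟩

lemma isSigma03_blurSet (hμ : ∀ (x : ℕ → Bool) (n : ℕ), μ (cylinder x n) = 1 / 2 ^ n) :
    IsSigma03 (BlurSet μ A) := by
  obtain ⟨e, he⟩ := exists_surjective_nat (ℚ × ℚ)
  let G (pq : ℚ × ℚ) : Set (ℕ → Bool) := {x | (pq.1 : ℝ) < pq.2 ∧
    (∃ᶠ n in atTop, densSeq μ A x n < pq.1) ∧ ∃ᶠ n in atTop, (pq.2 : ℝ) < densSeq μ A x n}
  refine ⟨fun n => G (e n), fun n => ?_, ?_⟩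
  · exact isOpen_const.isGδ.inter
      ((isGδ_setOf_frequently fun k => isOpen_setOf_densSeq k (· < ((e n).1 : ℝ))).inter
        (isGδ_setOf_frequently fun k => isOpen_setOf_densSeq k (((e n).2 : ℝ) < ·)))
  · rw [he.iUnion_comp G]
    ext x
    rw [mem_iUnion]
    exact liminf_lt_limsup_iff_exists_rat (isBoundedUnder_le_densSeq hμ x)
      (isBoundedUnder_ge_densSeq x)

end Sigma03

end Cantor

/-- **`Σ⁰₃`-completeness of the set of blurry points.** Let `μ` be the coin-tossing measure
on the Cantor space. If `A` is measurable, nonempty, has empty interior, and `A = Φ(A)`,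
then `Blur(A)` is `Σ⁰₃`, and every `Σ⁰₃` subset of `2^ℕ` is the preimage of `Blur(A)`
under some continuous map `2^ℕ → 2^ℕ`. -/
theorem stmt_12 (μ : Measure (ℕ → Bool))
    (hμ : ∀ (x : ℕ → Bool) (n : ℕ), μ (cylinder x n) = 1 / 2 ^ n)
    (A : Set (ℕ → Bool)) (hAmeas : MeasurableSet A) (hAne : A.Nonempty)
    (hAint : interior A = ∅) (hAPhi : A = PhiSet μ A) :
    IsSigma03 (BlurSet μ A) ∧
    ∀ S : Set (ℕ → Bool), IsSigma03 S →
      ∃ g : (ℕ → Bool) → (ℕ → Bool), Continuous g ∧ S = g ⁻¹' (BlurSet μ A) := by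
  refine ⟨Cantor.isSigma03_blurSet hμ, fun S ⟨G, hG, hSG⟩ => ?_⟩
  choose U hUo hU using fun m => (hG m).eq_iInter_nat
  obtain ⟨p₀, hp₀⟩ := hAne
  have hdips := Cantor.hasDips hμ hAmeas hAint hAPhi
  refine ⟨Cantor.reduction μ A U p₀, Cantor.continuous_reduction, ?_⟩
  ext x
  simp only [hSG, hU, mem_iUnion, mem_iInter, mem_preimage]
  constructor
  · rintro ⟨m, hm⟩
    exact Cantor.reduction_mem_blurSet hμ hdips hp₀ hUo hm
  · intro hx
    by_contra! hxS
    have h := Cantor.tendsto_densSeq_reduction hμ hdips hAPhi.subset hp₀ hxS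
    exact (show liminf _ _ < limsup _ _ from hx).ne (h.liminf_eq.trans h.limsup_eq.symm)
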